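/- arXiv:2002.09783 — 2 statements merged into one kernel-verified Lean document; each statement's English description precedes it below -/
import Mathlib

section
/- Suppose each gate g_i of a circuit g_1, ..., g_M carries a time coordinate c_i ∈ {1, ..., T} such that (i) gates with equal time coordinates are pairwise disjoint (if i ≠ i' and c_i = c_{i'} then g_i ∩ g_{i'} = ∅), (ii) the list is sorted by time (i < i' implies c_i ≤ c_{i'}), and (iii) there exist indices i_1 < i_2 < ... < i_T with c_{i_k} = k for every 1 ≤ k ≤ T and g_{i_k} ∩ g_{i_{k+1}} ≠ ∅ for every 1 ≤ k < T. Then the minimum depth over all schedules of the circuit equals exactly T. -/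
/-- If the gates of a circuit carry time coordinates in `{1, ..., T}` such that gates with
equal time coordinates are pairwise disjoint, the list is sorted by time, and there is a
"backbone" dependency chain occupying one gate in each cycle `1, ..., T`, then the minimum
depth over all schedules of the circuit is exactly `T`. -/
theorem stmt_4 {Q : Type*} [DecidableEq Q] [Fintype Q] {M T : ℕ} (g : Fin M → Finset Q)
    (hsize : ∀ i, (g i).card = 1 ∨ (g i).card = 2)
    (c : Fin M → ℕ) (hc : ∀ i, 1 ≤ c i ∧ c i ≤ T)
    (hdisj : ∀ i i' : Fin M, i ≠ i' → c i = c i' → g i ∩ g i' = ∅)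
    (hsorted : ∀ i i' : Fin M, i < i' → c i ≤ c i')
    (ι : Fin T → Fin M) (hmono : StrictMono ι)
    (hbackbone : ∀ k : Fin T, c (ι k) = (k : ℕ) + 1)
    (hchain : ∀ (j : ℕ) (h : j + 1 < T),
      (g (ι ⟨j, by omega⟩) ∩ g (ι ⟨j + 1, h⟩)).Nonempty) :
    IsLeast {d : ℕ | ∃ t : Fin M → ℕ, (∀ i, 1 ≤ t i) ∧
      (∀ i i' : Fin M, i < i' → (g i ∩ g i').Nonempty → t i < t i') ∧
      Finset.univ.sup t = d} T := by
  constructor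
  · refine ⟨c, fun i => (hc i).1, ?_, ?_⟩
    · intro i i' hlt hne
      rcases lt_or_eq_of_le (hsorted i i' hlt) with h | h
      · exact h
      · exfalso
        have := hdisj i i' (ne_of_lt hlt) h
        rw [this] at hne
        exact Finset.not_nonempty_empty hne
    · apply le_antisymm
      · exact Finset.sup_le fun i _ => (hc i).2
      · rcases Nat.eq_zero_or_pos T with hT | hT
        · omega
        · have hb := hbackbone ⟨T - 1, by omega⟩
          calc T = c (ι ⟨T - 1, by omega⟩) := by rw [hb, Fin.val_mk]; omega
            _ ≤ _ := Finset.le_sup (Finset.mem_univ _)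
  · rintro d ⟨t, ht1, ht2, htsup⟩
    rcases Nat.eq_zero_or_pos T with hT | hT
    · omega
    have key : ∀ k : ℕ, ∀ h : k < T, k + 1 ≤ t (ι ⟨k, h⟩) := by
      intro k
      induction k with
      | zero => intro h; exact ht1 _
      | succ n ih =>
        intro h
        have hn : n < T := by omega
        have h1 := ht2 (ι ⟨n, hn⟩) (ι ⟨n + 1, h⟩) (hmono (by simp [Fin.lt_def])) (hchain n h)
        have h2 := ih hn
        omega
    have h3 := key (T - 1) (by omega)
    have hle : t (ι ⟨T - 1, by omega⟩) ≤ d :=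
      htsup ▸ Finset.le_sup (Finset.mem_univ _)
    omega
end

section
/- Let g_1, ..., g_M be a circuit on a finite set Q equipped with a level function lev : {1, ..., M} → {1, ..., N} such that (i) for every index i with lev(i) ≥ 2 there exists an index i' < i with lev(i') = lev(i) − 1 and g_{i'} ∩ g_i ≠ ∅, and (ii) for every index i with lev(i) ≤ N − 1 there exists an index i'' > i with lev(i'') = lev(i) + 1 and g_i ∩ g_{i''} ≠ ∅. Then every schedule t of the circuit with depth at most N satisfies t(i) = lev(i) for every i. -/
/-- Rigidity: if a circuit has a level function `lev : {1,...,M} → {1,...,N}` such that every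
gate of level at least 2 depends on an earlier gate of the previous level, and every gate of
level at most `N - 1` is depended on by a later gate of the next level, then every schedule
of depth at most `N` schedules each gate exactly at its level. -/
theorem stmt_9 {Q : Type*} [DecidableEq Q] [Fintype Q] {M N : ℕ} (g : Fin M → Finset Q)
    (hsize : ∀ i, (g i).card = 1 ∨ (g i).card = 2)
    (lev : Fin M → ℕ) (hlev_range : ∀ i, 1 ≤ lev i ∧ lev i ≤ N)
    (hlev_prev : ∀ i : Fin M, 2 ≤ lev i →
      ∃ i' : Fin M, i' < i ∧ lev i' = lev i - 1 ∧ (g i' ∩ g i).Nonempty)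
    (hlev_next : ∀ i : Fin M, lev i ≤ N - 1 →
      ∃ i'' : Fin M, i < i'' ∧ lev i'' = lev i + 1 ∧ (g i ∩ g i'').Nonempty)
    (t : Fin M → ℕ) (hpos : ∀ i, 1 ≤ t i)
    (hdep : ∀ i i' : Fin M, i < i' → (g i ∩ g i').Nonempty → t i < t i')
    (hdepth : Finset.univ.sup t ≤ N) :
    ∀ i : Fin M, t i = lev i := by
  have A : ∀ n, ∀ i : Fin M, lev i ≤ n → lev i ≤ t i := by
    intro n
    induction n with
    | zero => intro i h; have := (hlev_range i).1; omega
    | succ n ih =>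
      intro i h
      by_cases h2 : 2 ≤ lev i
      · obtain ⟨i', hlt, hl, hne⟩ := hlev_prev i h2
        have h3 := hdep i' i hlt hne
        have h4 := ih i' (by omega)
        omega
      · have := hpos i; have := (hlev_range i).1; omega
  have B : ∀ n, ∀ i : Fin M, N - lev i ≤ n → t i ≤ lev i := by
    intro n
    induction n with
    | zero =>
      intro i h
      have h1 : t i ≤ N := le_trans (Finset.le_sup (Finset.mem_univ i)) hdepth
      have := (hlev_range i).2
      omega
    | succ n ih =>
      intro i h
      by_cases h2 : N - lev i ≤ n
      · exact ih i h2
      · have hle : lev i ≤ N - 1 := by omega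
        obtain ⟨i'', hlt, hl, hne⟩ := hlev_next i hle
        have h3 := hdep i i'' hlt hne
        have h4 := ih i'' (by omega)
        omega
  intro i
  have := A (lev i) i le_rfl
  have := B (N - lev i) i le_rfl
  omega
end
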